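/- arXiv:2212.13551 — 6 statements merged into one kernel-verified Lean document; each statement's English description precedes it below -/
import Mathlib

section
/- Let f : ℝ^d → ℝ be L-smooth and satisfy the μ-PL condition, and suppose f attains its infimum f*. Let the sequence (x^k) be generated by gradient descent with constant step-size 1/L, i.e. x^{k+1} = x^k − (1/L)∇f(x^k). Then for every k ≥ 0, f(x^k) − f* ≤ (1 − μ/L)^k (f(x^0) − f*). -/
/-!
The Lipschitz bound on `∇f`, applied along a segment, gives the descent lemma
`f (x + v) ≤ f x + ⟪∇f x, v⟫ + L/2 ‖v‖²`; for the step `v = -(1/L) ∇f x` it yields the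
sufficient decrease `‖∇f x‖² / (2L)`, which the PL inequality converts into the contraction
`f x⁺ - f* ≤ (1 - μ/L) (f x - f*)` of the optimality gap. Iterating it gives the geometric rate.
-/

open Set

section GradientDescent

variable {E : Type*} [NormedAddCommGroup E] [InnerProductSpace ℝ E] [CompleteSpace E]
  {f : E → ℝ} {L : ℝ}

theorem apply_add_le_of_gradient_lipschitz (hdiff : Differentiable ℝ f)
    (hsmooth : ∀ x y, ‖gradient f x - gradient f y‖ ≤ L * ‖x - y‖) (x v : E) :
    f (x + v) ≤ f x + inner ℝ (gradient f x) v + L / 2 * ‖v‖ ^ 2 := by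
  -- `f` minus its quadratic upper model along the line; it is antitone for `t ≥ 0`
  set g : ℝ → ℝ := fun t ↦
    f (x + t • v) - t * inner ℝ (gradient f x) v - L / 2 * t ^ 2 * ‖v‖ ^ 2 with hg
  have hderiv (t : ℝ) : HasDerivAt g
      (inner ℝ (gradient f (x + t • v) - gradient f x) v - L * t * ‖v‖ ^ 2) t := by
    have hline : HasDerivAt (fun s : ℝ ↦ x + s • v) v t := by
      simpa using ((hasDerivAt_id t).smul_const v).const_add x
    have hf : HasDerivAt (fun s : ℝ ↦ f (x + s • v)) (inner ℝ (gradient f (x + t • v)) v) t := by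
      exact (hdiff (x + t • v)).hasGradientAt.hasFDerivAt.comp_hasDerivAt t hline
    refine ((hf.sub ((hasDerivAt_id t).mul_const (inner ℝ (gradient f x) v))).sub
      (((hasDerivAt_pow 2 t).const_mul (L / 2)).mul_const (‖v‖ ^ 2))).congr_deriv ?_
    simp only [inner_sub_left, Nat.cast_ofNat]
    ring
  have hslope (t : ℝ) (ht : 0 ≤ t) :
      inner ℝ (gradient f (x + t • v) - gradient f x) v ≤ L * t * ‖v‖ ^ 2 :=
    calc inner ℝ (gradient f (x + t • v) - gradient f x) v
        ≤ ‖gradient f (x + t • v) - gradient f x‖ * ‖v‖ := real_inner_le_norm _ _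
      _ ≤ L * ‖x + t • v - x‖ * ‖v‖ := by gcongr; exact hsmooth _ _
      _ = L * t * ‖v‖ ^ 2 := by simp [norm_smul, abs_of_nonneg ht]; ring
  have hanti : AntitoneOn g (Ici 0) :=
    antitoneOn_of_hasDerivWithinAt_nonpos (convex_Ici 0)
      (fun t _ ↦ (hderiv t).continuousAt.continuousWithinAt)
      (fun t _ ↦ (hderiv t).hasDerivWithinAt)
      (fun t ht ↦ by rw [interior_Ici] at ht; linarith [hslope t ht.le])
  have := hanti self_mem_Ici (mem_Ici.2 zero_le_one) zero_le_one
  simp only [hg, zero_smul, add_zero, one_smul, zero_mul, sub_zero, one_mul, one_pow,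
    zero_pow two_ne_zero, mul_zero] at this
  linarith

theorem apply_sub_gradient_le (hdiff : Differentiable ℝ f)
    (hsmooth : ∀ x y, ‖gradient f x - gradient f y‖ ≤ L * ‖x - y‖) (hL : L ≠ 0) (x : E) :
    f (x - (1 / L) • gradient f x) ≤ f x - ‖gradient f x‖ ^ 2 / (2 * L) := by
  have h := apply_add_le_of_gradient_lipschitz hdiff hsmooth x (-(1 / L) • gradient f x)
  rw [neg_smul, ← sub_eq_add_neg, inner_neg_right, real_inner_smul_right,
    real_inner_self_eq_norm_sq, norm_neg, norm_smul, mul_pow, Real.norm_eq_abs, sq_abs] at h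
  convert h using 1
  field_simp
  ring

theorem apply_sub_gradient_sub_le_of_pl (hdiff : Differentiable ℝ f)
    (hsmooth : ∀ x y, ‖gradient f x - gradient f y‖ ≤ L * ‖x - y‖) (hL : 0 < L)
    {μ m : ℝ} {x : E} (hPL : ‖gradient f x‖ ^ 2 ≥ 2 * μ * (f x - m)) :
    f (x - (1 / L) • gradient f x) - m ≤ (1 - μ / L) * (f x - m) := by
  have hstep := apply_sub_gradient_le hdiff hsmooth hL.ne' x
  have hPL' : μ / L * (f x - m) ≤ ‖gradient f x‖ ^ 2 / (2 * L) := by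
    rw [div_mul_eq_mul_div, div_le_div_iff₀ hL (by positivity)]
    nlinarith
  linarith

end GradientDescent

theorem le_pow_mul_of_le_mul_of_nonneg {R : Type*} [CommRing R] [LinearOrder R]
    [IsStrictOrderedRing R] {a : ℕ → R} {q : R} (ha : ∀ k, 0 ≤ a k)
    (h : ∀ k, a (k + 1) ≤ q * a k) (k : ℕ) : a k ≤ q ^ k * a 0 := by
  rcases le_or_gt 0 q with hq | hq
  · induction k with
    | zero => simp
    | succ k ih =>
      calc a (k + 1) ≤ q * a k := h k
        _ ≤ q * (q ^ k * a 0) := mul_le_mul_of_nonneg_left ih hq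
        _ = q ^ (k + 1) * a 0 := by ring
  · -- `0 ≤ a (j + 1) ≤ q * a j ≤ 0` forces every term to vanish
    have hzero (j : ℕ) : a j = 0 :=
      le_antisymm (by nlinarith [ha (j + 1), h j]) (ha j)
    simp [hzero]

theorem gradient_descent_linear_convergence_general
    {d : ℕ} (f : EuclideanSpace ℝ (Fin d) → ℝ) (L μ : ℝ)
    (hL : 0 < L)
    (hdiff : Differentiable ℝ f)
    (hsmooth : ∀ x y : EuclideanSpace ℝ (Fin d),
      ‖gradient f x - gradient f y‖ ≤ L * ‖x - y‖)
    (xstar : EuclideanSpace ℝ (Fin d))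
    (hattain : ∀ y : EuclideanSpace ℝ (Fin d), f xstar ≤ f y)
    (hPL : ∀ x : EuclideanSpace ℝ (Fin d),
      ‖gradient f x‖ ^ 2 ≥ 2 * μ * (f x - f xstar))
    (x : ℕ → EuclideanSpace ℝ (Fin d))
    (hGD : ∀ k : ℕ, x (k + 1) = x k - (1 / L) • gradient f (x k)) :
    ∀ k : ℕ, f (x k) - f xstar ≤ (1 - μ / L) ^ k * (f (x 0) - f xstar) :=
  le_pow_mul_of_le_mul_of_nonneg (fun k ↦ sub_nonneg.2 (hattain (x k))) fun k ↦ by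
    rw [hGD k]
    exact apply_sub_gradient_sub_le_of_pl hdiff hsmooth hL (hPL (x k))

/-- Gradient descent with step-size `1/L` on an `L`-smooth function
satisfying the `μ`-PL condition, whose infimum `f* = f xstar` is attained, converges
linearly: `f (x k) - f* ≤ (1 - μ/L)^k * (f (x 0) - f*)`. -/
theorem gradient_descent_linear_convergence
    {d : ℕ} (f : EuclideanSpace ℝ (Fin d) → ℝ) (L μ : ℝ)
    (hL : 0 < L) (hμ : 0 < μ)
    (hdiff : Differentiable ℝ f)
    (hsmooth : ∀ x y : EuclideanSpace ℝ (Fin d),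
      ‖gradient f x - gradient f y‖ ≤ L * ‖x - y‖)
    (xstar : EuclideanSpace ℝ (Fin d))
    (hattain : ∀ y : EuclideanSpace ℝ (Fin d), f xstar ≤ f y)
    (hPL : ∀ x : EuclideanSpace ℝ (Fin d),
      ‖gradient f x‖ ^ 2 ≥ 2 * μ * (f x - f xstar))
    (x : ℕ → EuclideanSpace ℝ (Fin d))
    (hGD : ∀ k : ℕ, x (k + 1) = x k - (1 / L) • gradient f (x k)) :
    ∀ k : ℕ, f (x k) - f xstar ≤ (1 - μ / L) ^ k * (f (x 0) - f xstar) :=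
  gradient_descent_linear_convergence_general f L μ hL hdiff hsmooth xstar hattain hPL x hGD
end

section
/- For every y > 0, the function v_y : ℝ → ℝ is differentiable and its derivative satisfies v_y′(x) = x − b_y(x) for all x ∈ ℝ; consequently v_y′ is 33-Lipschitz. -/
/-- The piecewise scalar component `v_y` of the hard instance. -/
noncomputable def vFun (y x : ℝ) : ℝ :=
  if x ≤ 31 / 32 * y then x ^ 2 / 2
  else if x ≤ y then x ^ 2 / 2 - 16 * (x - 31 / 32 * y) ^ 2
  else if x ≤ 33 / 32 * y then x ^ 2 / 2 - y ^ 2 / 32 + 16 * (x - 33 / 32 * y) ^ 2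
  else x ^ 2 / 2 - y ^ 2 / 32

/-- The nonconvex bump `b_y(x) = y - 32|x - y|` on `[(31/32)y, (33/32)y]`, zero elsewhere. -/
noncomputable def bFun (y x : ℝ) : ℝ :=
  if 31 / 32 * y ≤ x ∧ x ≤ 33 / 32 * y then y - 32 * |x - y| else 0

/-!
`v_y` is glued from four quadratics whose values and slopes agree at the breakpoints
`31y/32 < y < 33y/32`, so it is differentiable and its derivative is the piecewise linear
function `x - b_y(x)`.
Writing `b_y = max (y - 32|x - y|) 0` shows that `b_y` is `32`-Lipschitz, hence `x - b_y(x)` is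
`33`-Lipschitz.
-/

open Set

theorem bFun_eq_max (y x : ℝ) : bFun y x = max (y - 32 * |x - y|) 0 := by
  unfold bFun
  split_ifs with h
  · refine (max_eq_left ?_).symm
    have : |x - y| ≤ y / 32 := abs_le.mpr ⟨by linarith [h.1], by linarith [h.2]⟩
    linarith
  · refine (max_eq_right ?_).symm
    rcases abs_cases (x - y) with ⟨hxy, hs⟩ | ⟨hxy, hs⟩ <;> rw [hxy] <;>
      rcases not_and_or.mp h with h | h <;> linarith

theorem bFun_eq_ite (y x : ℝ) : bFun y x =
    if x ≤ 31 / 32 * y then 0 else if x ≤ y then 32 * x - 31 * y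
    else if x ≤ 33 / 32 * y then 33 * y - 32 * x else 0 := by
  rw [bFun_eq_max, max_def]
  rcases abs_cases (x - y) with ⟨h, hs⟩ | ⟨h, hs⟩ <;> rw [h] <;> split_ifs <;> linarith

theorem abs_bFun_sub_bFun_le (y x₁ x₂ : ℝ) : |bFun y x₁ - bFun y x₂| ≤ 32 * |x₁ - x₂| := by
  rw [bFun_eq_max, bFun_eq_max]
  calc _ ≤ |(y - 32 * |x₁ - y|) - (y - 32 * |x₂ - y|)| := abs_max_sub_max_le_abs _ _ _
    _ = 32 * |(|x₁ - y|) - (|x₂ - y|)| := by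
      rw [show ∀ a b : ℝ, (y - 32 * a) - (y - 32 * b) = 32 * (b - a) by intros; ring,
        abs_mul, abs_sub_comm]
      norm_num
    _ ≤ 32 * |x₁ - x₂| := by
      simpa using mul_le_mul_of_nonneg_left (abs_abs_sub_abs_le_abs_sub (x₁ - y) (x₂ - y))
        (by norm_num : (0 : ℝ) ≤ 32)

theorem hasDerivAt_ite_le {F : Type*} [NormedAddCommGroup F] [NormedSpace ℝ F]
    {f g : ℝ → F} {f' g' : ℝ → F} {a : ℝ}
    (hf : ∀ x, HasDerivAt f (f' x) x) (hg : ∀ x, HasDerivAt g (g' x) x)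
    (hfg : f a = g a) (hfg' : f' a = g' a) (x : ℝ) :
    HasDerivAt (fun t => if t ≤ a then f t else g t) (if x ≤ a then f' x else g' x) x := by
  rcases lt_trichotomy x a with hx | rfl | hx
  · rw [if_pos hx.le]
    exact (hf x).congr_of_eventuallyEq <|
      (eventually_lt_nhds hx).mono fun t ht => if_pos ht.le
  · rw [if_pos le_rfl]
    have hl : HasDerivWithinAt (fun t => if t ≤ x then f t else g t) (f' x) (Iic x) x :=
      (hf x).hasDerivWithinAt.congr (fun t ht => if_pos ht) (if_pos le_rfl)
    have hr : HasDerivWithinAt (fun t => if t ≤ x then f t else g t) (f' x) (Ici x) x := by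
      refine hfg' ▸ (hg x).hasDerivWithinAt.congr (fun t ht => ?_) (by simp [hfg])
      rcases eq_or_lt_of_le (mem_Ici.mp ht) with rfl | ht
      · simp [hfg]
      · exact if_neg (not_le.mpr ht)
    simpa [Iic_union_Ici, hasDerivWithinAt_univ] using hl.union hr
  · rw [if_neg (not_le.mpr hx)]
    exact (hg x).congr_of_eventuallyEq <|
      (eventually_gt_nhds hx).mono fun t ht => if_neg (not_le.mpr ht)

theorem hasDerivAt_vFun {y : ℝ} (hy : 0 < y) (x : ℝ) : HasDerivAt (vFun y) (x - bFun y x) x := by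
  have h₁ (x : ℝ) : HasDerivAt (fun t : ℝ => t ^ 2 / 2) x x := by
    simpa using (hasDerivAt_pow 2 x).div_const 2
  have h₂ (x : ℝ) : HasDerivAt (fun t => t ^ 2 / 2 - 16 * (t - 31 / 32 * y) ^ 2)
      (x - 32 * (x - 31 / 32 * y)) x := by
    refine ((h₁ x).sub (((hasDerivAt_id' x).sub_const _).pow 2 |>.const_mul 16)).congr_deriv ?_
    norm_num; ring
  have h₃ (x : ℝ) : HasDerivAt (fun t => t ^ 2 / 2 - y ^ 2 / 32 + 16 * (t - 33 / 32 * y) ^ 2)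
      (x + 32 * (x - 33 / 32 * y)) x := by
    refine (((h₁ x).sub_const _).add
      (((hasDerivAt_id' x).sub_const _).pow 2 |>.const_mul 16)).congr_deriv ?_
    norm_num; ring
  have h₄ (x : ℝ) : HasDerivAt (fun t => t ^ 2 / 2 - y ^ 2 / 32) x x := (h₁ x).sub_const _
  have h₃₄ := hasDerivAt_ite_le (a := 33 / 32 * y) h₃ h₄ (by ring) (by ring)
  have hy' : y ≤ 33 / 32 * y := by linarith
  have h₂₃₄ := hasDerivAt_ite_le (a := y) h₂ h₃₄ (by simp only [if_pos hy']; ring)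
    (by simp only [if_pos hy']; ring)
  have ha : 31 / 32 * y ≤ y := by linarith
  have h := hasDerivAt_ite_le (a := 31 / 32 * y) h₁ h₂₃₄ (by simp only [if_pos ha]; ring)
    (by simp only [if_pos ha]; ring) x
  refine h.congr_deriv ?_
  rw [bFun_eq_ite]
  split_ifs <;> ring

/-- For `y > 0`, `v_y` is differentiable with `v_y'(x) = x - b_y(x)`,
and consequently `v_y'` is `33`-Lipschitz. -/
theorem vFun_hasDerivAt_and_deriv_lipschitz (y : ℝ) (hy : 0 < y) :
    (∀ x : ℝ, HasDerivAt (vFun y) (x - bFun y x) x) ∧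
    (∀ x₁ x₂ : ℝ, |(x₁ - bFun y x₁) - (x₂ - bFun y x₂)| ≤ 33 * |x₁ - x₂|) := by
  refine ⟨hasDerivAt_vFun hy, fun x₁ x₂ => ?_⟩
  calc |(x₁ - bFun y x₁) - (x₂ - bFun y x₂)|
      = |(x₁ - x₂) - (bFun y x₁ - bFun y x₂)| := by ring_nf
    _ ≤ |x₁ - x₂| + |bFun y x₁ - bFun y x₂| := abs_sub _ _
    _ ≤ 33 * |x₁ - x₂| := by linarith [abs_bFun_sub_bFun_le y x₁ x₂]
end

section
/- For all positive integers T, t, the function x ↦ g_{T,t}(y − x) is a zero-chain on ℝ^{Tt}: for every x ∈ ℝ^{Tt} and every k, if supp(x) ⊆ {1, …, k} then supp(∇_x [g_{T,t}(y − x)]) ⊆ {1, …, k+1}. -/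
/-- The `k`-th coordinate (1-indexed) of `x ∈ ℝ^d`, with out-of-range coordinates
(including the convention `x_0 = 0`) equal to `0`. -/
noncomputable def coord {d : ℕ} (x : EuclideanSpace ℝ (Fin d)) (k : ℕ) : ℝ :=
  if h : 1 ≤ k ∧ k ≤ d then x ⟨k - 1, by omega⟩ else 0

/-- The quadratic (convex) part `q_{T,t}` of the hard instance, with the convention
`x_0 = 0` (encoded by `coord x 0 = 0`). -/
noncomputable def qFun (T t : ℕ) (x : EuclideanSpace ℝ (Fin (T * t))) : ℝ :=
  (1 / 2) * ∑ i ∈ Finset.range t,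
    ((7 / 8 * coord x (i * T) - coord x (i * T + 1)) ^ 2
      + ∑ j ∈ Finset.Icc 1 (T - 1), (coord x (i * T + j + 1) - coord x (i * T + j)) ^ 2)

/-- The reference vector `y ∈ ℝ^{Tt}` with `y_{qT+b} = (7/8)^q` for `b ∈ {1, …, T}`;
in 0-based indexing, `y i = (7/8)^(i / T)`. -/
noncomputable def yVec (T t : ℕ) : EuclideanSpace ℝ (Fin (T * t)) :=
  WithLp.toLp 2 (fun i => (7 / 8 : ℝ) ^ ((i : ℕ) / T))

/-- The hard instance `g_{T,t}(x) = q_{T,t}(x) + Σ_{i=1}^{Tt} v_{y_i}(x_i)`. -/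
noncomputable def gFun (T t : ℕ) (x : EuclideanSpace ℝ (Fin (T * t))) : ℝ :=
  qFun T t x + ∑ i : Fin (T * t), vFun (yVec T t i) (x i)

/-! Write `u = y - x` and let `n ≥ k + 2` be the index of the partial derivative. Then `u`
agrees with `y` from coordinate `n - 1` on, and `y` is a critical point "along `e_n`" of every
summand of `g`: each edge term of `q` through coordinate `n` vanishes at `y` (the weights are
constant on blocks and drop by the factor `7/8` from one block to the next, exactly as in `q`),
and `v_{y_n}` has derivative `0` at `y_n`. Hence `s ↦ g(u - s e_n) - g(u)` is `O(s²)`, so the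
`n`-th partial derivative vanishes; where `g(y - ·)` is not differentiable, Mathlib's gradient
is `0` anyway. -/

open Filter Topology Asymptotics

theorem inner_gradient_eq_zero_of_isBigO_sq {E : Type*} [NormedAddCommGroup E]
    [InnerProductSpace ℝ E] [CompleteSpace E] {f : E → ℝ} {x v : E}
    (hf : (fun s : ℝ => f (x + s • v) - f x) =O[𝓝 0] fun s => s ^ 2) :
    inner ℝ (gradient f x) v = 0 := by
  by_cases hd : DifferentiableAt ℝ f x
  · have h₀ : HasLineDerivAt ℝ f 0 x v :=
      hasLineDerivAt_iff_isLittleO_nhds_zero.mpr <| by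
        simpa using hf.trans_isLittleO (isLittleO_pow_id one_lt_two)
    exact (hd.hasGradientAt.hasFDerivAt.hasLineDerivAt v).unique h₀
  · simp [gradient_eq_zero_of_not_differentiableAt hd]

theorem abs_vFun_sub_vFun_le {y s : ℝ} (hy : 0 < y) (hs : |s| < y / 32) :
    |vFun y (y - s) - vFun y y| ≤ 17 * s ^ 2 := by
  obtain ⟨hs₁, hs₂⟩ := abs_lt.mp hs
  have hyy : vFun y y = y ^ 2 / 2 - 16 * (y - 31 / 32 * y) ^ 2 := by
    rw [vFun, if_neg (by linarith), if_pos le_rfl]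
  have hlow : ¬y - s ≤ 31 / 32 * y := by linarith
  rw [vFun, if_neg hlow, hyy, abs_le]
  rcases le_or_gt 0 s with h | h
  · rw [if_pos (by linarith)]
    constructor <;> nlinarith
  · rw [if_neg (by linarith), if_pos (by linarith)]
    constructor <;> nlinarith

theorem vFun_sub_vFun_isBigO {y : ℝ} (hy : 0 < y) :
    (fun s : ℝ => vFun y (y - s) - vFun y y) =O[𝓝 0] fun s => s ^ 2 := by
  refine IsBigO.of_bound 17 ?_
  filter_upwards [Metric.ball_mem_nhds (0 : ℝ) (by positivity : 0 < y / 32)] with s hs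
  rw [Real.norm_eq_abs, Real.norm_eq_abs, abs_sq]
  exact abs_vFun_sub_vFun_le hy (by simpa using hs)

section coord

variable {d : ℕ}

theorem coord_sub (a b : EuclideanSpace ℝ (Fin d)) (m : ℕ) :
    coord (a - b) m = coord a m - coord b m := by
  unfold coord
  split_ifs <;> simp

theorem coord_smul_single (i : Fin d) (s : ℝ) (m : ℕ) :
    coord (s • EuclideanSpace.single i (1 : ℝ)) m = if m = (i : ℕ) + 1 then s else 0 := by
  unfold coord
  split_ifs with h₁ h₂ h₂
  · simp [PiLp.single_apply, Fin.ext_iff]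
    omega
  · simp [PiLp.single_apply, Fin.ext_iff]
    omega
  · have := i.isLt
    omega
  · rfl

theorem coord_succ (x : EuclideanSpace ℝ (Fin d)) (i : Fin d) :
    coord x ((i : ℕ) + 1) = x i := by
  rw [coord, dif_pos ⟨by omega, i.isLt⟩]
  rfl

theorem coord_eq_zero_of_support_le {x : EuclideanSpace ℝ (Fin d)} {k : ℕ}
    (hx : ∀ i : Fin d, x i ≠ 0 → (i : ℕ) + 1 ≤ k) {m : ℕ} (hm : k < m) :
    coord x m = 0 := by
  unfold coord
  split_ifs with h
  · by_contra hne
    have := hx _ hne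
    simp only at this
    omega
  · rfl

theorem abs_edge_sub_smul_single_le (u : EuclideanSpace ℝ (Fin d)) (i : Fin d) (s : ℝ)
    {c : ℝ} (hc₀ : 0 ≤ c) (hc₁ : c ≤ 1) (m : ℕ)
    (hflat : m = (i : ℕ) + 1 ∨ m + 1 = (i : ℕ) + 1 → c * coord u m = coord u (m + 1)) :
    |(c * coord (u - s • EuclideanSpace.single i 1) m
        - coord (u - s • EuclideanSpace.single i 1) (m + 1)) ^ 2
      - (c * coord u m - coord u (m + 1)) ^ 2| ≤ s ^ 2 := by
  simp only [coord_sub, coord_smul_single]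
  generalize coord u m = a, coord u (m + 1) = b at hflat ⊢
  split_ifs with h₁ h₂ h₂
  · omega
  · obtain rfl := hflat (Or.inl h₁)
    rw [show (c * (a - s) - (c * a - 0)) ^ 2 - (c * a - c * a) ^ 2 = c ^ 2 * s ^ 2 by ring,
      abs_of_nonneg (by positivity)]
    exact mul_le_of_le_one_left (sq_nonneg s) (pow_le_one₀ hc₀ hc₁)
  · obtain rfl := hflat (Or.inr h₂)
    rw [show (c * (a - 0) - (c * a - s)) ^ 2 - (c * a - c * a) ^ 2 = s ^ 2 by ring, abs_sq]
  · simpa using sq_nonneg s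

end coord

section yVec

variable {T t : ℕ}

theorem coord_yVec {q r : ℕ} (hr₁ : 1 ≤ r) (hr₂ : r ≤ T) (hq : q < t) :
    coord (yVec T t) (q * T + r) = (7 / 8 : ℝ) ^ q := by
  have hle : q * T + r ≤ T * t := by nlinarith
  rw [coord, dif_pos ⟨by omega, hle⟩]
  change (7 / 8 : ℝ) ^ ((q * T + r - 1) / T) = _
  rw [show q * T + r - 1 = r - 1 + T * q by rw [mul_comm]; omega,
    Nat.add_mul_div_left _ _ (by omega), Nat.div_eq_of_lt (by omega), zero_add]

theorem coord_yVec_block_start {q : ℕ} (hT : 0 < T) (hq₁ : 1 ≤ q) (hq : q < t) :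
    7 / 8 * coord (yVec T t) (q * T) = coord (yVec T t) (q * T + 1) := by
  obtain ⟨p, rfl⟩ := Nat.exists_eq_add_of_le' hq₁
  have hend : coord (yVec T t) ((p + 1) * T) = (7 / 8 : ℝ) ^ p := by
    rw [add_one_mul]
    exact coord_yVec hT le_rfl (by omega)
  rw [hend, coord_yVec le_rfl hT hq, pow_succ']

theorem coord_yVec_succ_of_lt {q j : ℕ} (hj₁ : 1 ≤ j) (hj : j < T) (hq : q < t) :
    coord (yVec T t) (q * T + j + 1) = coord (yVec T t) (q * T + j) := by
  rw [add_assoc, coord_yVec (by omega) hj hq, coord_yVec hj₁ hj.le hq]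

end yVec

noncomputable def qBlock {d : ℕ} (T : ℕ) (x : EuclideanSpace ℝ (Fin d)) (q : ℕ) : ℝ :=
  (7 / 8 * coord x (q * T) - coord x (q * T + 1)) ^ 2
    + ∑ j ∈ Finset.Icc 1 (T - 1), (coord x (q * T + j + 1) - coord x (q * T + j)) ^ 2

theorem qFun_eq_sum_qBlock (T t : ℕ) (x : EuclideanSpace ℝ (Fin (T * t))) :
    qFun T t x = 1 / 2 * ∑ q ∈ Finset.range t, qBlock T x q := rfl

section perturbation

variable {T t : ℕ} (hT : 0 < T) {u : EuclideanSpace ℝ (Fin (T * t))} {i : Fin (T * t)}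
  (hi : 1 ≤ (i : ℕ)) (hu : ∀ m, (i : ℕ) ≤ m → coord u m = coord (yVec T t) m)
include hT hi hu

theorem abs_qBlock_sub_smul_single_le (s : ℝ) {q : ℕ} (hq : q < t) :
    |qBlock T (u - s • EuclideanSpace.single i 1) q - qBlock T u q| ≤ T * s ^ 2 := by
  set w := u - s • EuclideanSpace.single i 1
  have hstart : |(7 / 8 * coord w (q * T) - coord w (q * T + 1)) ^ 2
      - (7 / 8 * coord u (q * T) - coord u (q * T + 1)) ^ 2| ≤ s ^ 2 := by
    refine abs_edge_sub_smul_single_le u i s (by norm_num) (by norm_num) _ fun h => ?_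
    have hq₁ : 1 ≤ q := Nat.pos_of_ne_zero (by rintro rfl; omega)
    rw [hu _ (by omega), hu _ (by omega), coord_yVec_block_start hT hq₁ hq]
  have hinner : ∀ j ∈ Finset.Icc 1 (T - 1),
      |(coord w (q * T + j + 1) - coord w (q * T + j)) ^ 2
        - (coord u (q * T + j + 1) - coord u (q * T + j)) ^ 2| ≤ s ^ 2 := by
    intro j hj
    rw [Finset.mem_Icc] at hj
    rw [sub_sq_comm (coord w _), sub_sq_comm (coord u _)]
    simpa only [one_mul] using abs_edge_sub_smul_single_le u i s zero_le_one le_rfl (q * T + j)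
      fun h => by rw [one_mul, hu _ (by omega), hu _ (by omega),
        coord_yVec_succ_of_lt hj.1 (by omega) hq]
  calc |qBlock T w q - qBlock T u q|
      = |((7 / 8 * coord w (q * T) - coord w (q * T + 1)) ^ 2
          - (7 / 8 * coord u (q * T) - coord u (q * T + 1)) ^ 2)
        + ∑ j ∈ Finset.Icc 1 (T - 1), ((coord w (q * T + j + 1) - coord w (q * T + j)) ^ 2
          - (coord u (q * T + j + 1) - coord u (q * T + j)) ^ 2)| := by
        rw [qBlock, qBlock, Finset.sum_sub_distrib]
        ring_nf
    _ ≤ s ^ 2 + ∑ _j ∈ Finset.Icc 1 (T - 1), s ^ 2 :=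
        (abs_add_le _ _).trans (add_le_add hstart
          ((Finset.abs_sum_le_sum_abs _ _).trans (Finset.sum_le_sum hinner)))
    _ = T * s ^ 2 := by
        rw [Finset.sum_const, Nat.card_Icc, Nat.add_sub_cancel, nsmul_eq_mul,
          Nat.cast_pred hT]
        ring

theorem abs_qFun_sub_smul_single_le (s : ℝ) :
    |qFun T t (u - s • EuclideanSpace.single i 1) - qFun T t u| ≤ T * t * s ^ 2 := by
  rw [qFun_eq_sum_qBlock, qFun_eq_sum_qBlock, ← mul_sub, ← Finset.sum_sub_distrib, abs_mul,
    abs_of_pos one_half_pos]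
  calc 1 / 2 * |∑ q ∈ Finset.range t,
        (qBlock T (u - s • EuclideanSpace.single i 1) q - qBlock T u q)|
      ≤ 1 / 2 * ∑ _q ∈ Finset.range t, (T * s ^ 2 : ℝ) := by
        gcongr
        exact (Finset.abs_sum_le_sum_abs _ _).trans <| Finset.sum_le_sum fun q hq =>
          abs_qBlock_sub_smul_single_le hT hi hu s (Finset.mem_range.mp hq)
    _ ≤ T * t * s ^ 2 := by
        rw [Finset.sum_const, Finset.card_range, nsmul_eq_mul]
        nlinarith [show (0 : ℝ) ≤ T * t * s ^ 2 by positivity]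

theorem gFun_sub_smul_single_isBigO :
    (fun s : ℝ => gFun T t (u - s • EuclideanSpace.single i 1) - gFun T t u)
      =O[𝓝 0] fun s => s ^ 2 := by
  have hui : u i = yVec T t i := by simpa only [coord_succ] using hu (i + 1) (by omega)
  have hv : ∀ s : ℝ,
      ∑ j, vFun (yVec T t j) ((u - s • EuclideanSpace.single i 1 : EuclideanSpace ℝ _) j)
        - ∑ j, vFun (yVec T t j) (u j)
      = vFun (yVec T t i) (yVec T t i - s) - vFun (yVec T t i) (yVec T t i) := by
    intro s
    rw [← Finset.sum_sub_distrib, Finset.sum_eq_single i]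
    · simp [hui]
    · intro j _ hj
      simp [hj]
    · simp
  have hq : (fun s : ℝ => qFun T t (u - s • EuclideanSpace.single i 1) - qFun T t u)
      =O[𝓝 0] fun s => s ^ 2 :=
    IsBigO.of_bound (T * t) <| Eventually.of_forall fun s => by
      simpa only [Real.norm_eq_abs, abs_sq] using abs_qFun_sub_smul_single_le hT hi hu s
  simp only [gFun, add_sub_add_comm, hv]
  exact hq.add (vFun_sub_vFun_isBigO (pow_pos (by norm_num) _))

end perturbation

theorem gFun_shifted_zero_chain_general (T t : ℕ) (hT : 0 < T) :
    ∀ (x : EuclideanSpace ℝ (Fin (T * t))) (k : ℕ),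
      (∀ i : Fin (T * t), x i ≠ 0 → (i : ℕ) + 1 ≤ k) →
      ∀ i : Fin (T * t),
        gradient (fun z : EuclideanSpace ℝ (Fin (T * t)) => gFun T t (yVec T t - z)) x i ≠ 0 →
        (i : ℕ) + 1 ≤ k + 1 := by
  intro x k hx i hgrad
  by_contra! hik
  refine hgrad ?_
  have hu : ∀ m, (i : ℕ) ≤ m → coord (yVec T t - x) m = coord (yVec T t) m := fun m hm => by
    rw [coord_sub, coord_eq_zero_of_support_le hx (by omega), sub_zero]
  have hslice := gFun_sub_smul_single_isBigO hT (by omega) hu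
  have := inner_gradient_eq_zero_of_isBigO_sq (f := fun z => gFun T t (yVec T t - z)) (x := x)
    (v := EuclideanSpace.single i 1) (by simpa only [sub_add_eq_sub_sub] using hslice)
  rw [EuclideanSpace.inner_single_right] at this
  simpa using this

/-- For all positive `T, t`, the shifted hard instance
`x ↦ g_{T,t}(y - x)` is a zero-chain on `ℝ^{Tt}`: if `supp x ⊆ {1, …, k}` then
`supp (∇_x [g_{T,t}(y - x)]) ⊆ {1, …, k+1}`. -/
theorem gFun_shifted_zero_chain (T t : ℕ) (hT : 0 < T) (ht : 0 < t) :
    ∀ (x : EuclideanSpace ℝ (Fin (T * t))) (k : ℕ),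
      (∀ i : Fin (T * t), x i ≠ 0 → (i : ℕ) + 1 ≤ k) →
      ∀ i : Fin (T * t),
        gradient (fun z : EuclideanSpace ℝ (Fin (T * t)) => gFun T t (yVec T t - z)) x i ≠ 0 →
        (i : ℕ) + 1 ≤ k + 1 :=
  gFun_shifted_zero_chain_general T t hT
end

section
/- For all positive integers T, t: g_{T,t} attains its global minimum at x* = 0, inf g_{T,t} = g_{T,t}(0) = 0, and g_{T,t}(x) ≤ q_{T,t}(x) + (1/2)‖x‖² for every x ∈ ℝ^{Tt}. -/
lemma vFun_zero_right {y : ℝ} (hy : 0 ≤ y) : vFun y 0 = 0 := by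
  simp [vFun, hy]

lemma vFun_nonneg {y : ℝ} (hy : 0 ≤ y) (x : ℝ) : 0 ≤ vFun y x := by
  unfold vFun
  split_ifs <;> nlinarith [sq_nonneg x, sq_nonneg (x - y), sq_nonneg (x + y)]

lemma vFun_le_sq_div_two (y x : ℝ) : vFun y x ≤ x ^ 2 / 2 := by
  unfold vFun
  split_ifs <;> nlinarith [sq_nonneg (x - 31 / 32 * y), sq_nonneg (x - y), sq_nonneg y]

lemma coord_zero {d : ℕ} (k : ℕ) : coord (0 : EuclideanSpace ℝ (Fin d)) k = 0 := by
  unfold coord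
  split <;> rfl

lemma qFun_zero (T t : ℕ) : qFun T t 0 = 0 := by
  simp [qFun, coord_zero]

lemma qFun_nonneg (T t : ℕ) (x : EuclideanSpace ℝ (Fin (T * t))) : 0 ≤ qFun T t x := by
  unfold qFun
  positivity

lemma yVec_pos (T t : ℕ) (i : Fin (T * t)) : 0 < yVec T t i := by
  simp only [yVec, PiLp.toLp_apply]
  positivity

lemma gFun_zero (T t : ℕ) : gFun T t 0 = 0 := by
  simp [gFun, qFun_zero, vFun_zero_right (yVec_pos T t _).le]

lemma gFun_nonneg (T t : ℕ) (x : EuclideanSpace ℝ (Fin (T * t))) : 0 ≤ gFun T t x :=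
  add_nonneg (qFun_nonneg T t x)
    (Finset.sum_nonneg fun i _ => vFun_nonneg (yVec_pos T t i).le (x i))

lemma gFun_le_qFun_add_norm_sq (T t : ℕ) (x : EuclideanSpace ℝ (Fin (T * t))) :
    gFun T t x ≤ qFun T t x + (1 / 2) * ‖x‖ ^ 2 := by
  have hsum : ∑ i, vFun (yVec T t i) (x i) ≤ ∑ i, (1 / 2) * x i ^ 2 :=
    Finset.sum_le_sum fun i _ => (vFun_le_sq_div_two _ _).trans_eq (by ring)
  simpa only [gFun, EuclideanSpace.norm_sq_eq, Real.norm_eq_abs, sq_abs, Finset.mul_sum]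
    using add_le_add_right hsum (qFun T t x)

theorem gFun_min_at_zero_general (T t : ℕ) :
    gFun T t 0 = 0 ∧
    (∀ x : EuclideanSpace ℝ (Fin (T * t)), gFun T t 0 ≤ gFun T t x) ∧
    (∀ x : EuclideanSpace ℝ (Fin (T * t)), gFun T t x ≤ qFun T t x + (1 / 2) * ‖x‖ ^ 2) :=
  ⟨gFun_zero T t, fun x => (gFun_zero T t).symm ▸ gFun_nonneg T t x,
    gFun_le_qFun_add_norm_sq T t⟩

/-- For all positive `T, t`: `g_{T,t}` attains its global minimum at
`x* = 0`, with `inf g_{T,t} = g_{T,t}(0) = 0`, and `g_{T,t}(x) ≤ q_{T,t}(x) + (1/2)‖x‖²`. -/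
theorem gFun_min_at_zero (T t : ℕ) (hT : 0 < T) (ht : 0 < t) :
    gFun T t 0 = 0 ∧
    (∀ x : EuclideanSpace ℝ (Fin (T * t)), gFun T t 0 ≤ gFun T t x) ∧
    (∀ x : EuclideanSpace ℝ (Fin (T * t)), gFun T t x ≤ qFun T t x + (1 / 2) * ‖x‖ ^ 2) :=
  gFun_min_at_zero_general T t
end

section
/- Fix positive integers T, t and x ∈ ℝ^{Tt}. For k ∈ {2, …, Tt}: if z̃_{k−2} < 31/32, 5/7 ≤ z̃_{k−1} < 31/32, and z̃_k ∈ [31/32, 33/32], then Dominate(k−1) holds. -/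
/-- Extended coordinates: `x̃_0 = 0`, `x̃_i = x_i` for `1 ≤ i ≤ Tt`, `x̃_{Tt+1} = x_{Tt}`. -/
noncomputable def xTilde (T t : ℕ) (x : EuclideanSpace ℝ (Fin (T * t))) (k : ℕ) : ℝ :=
  if k ≤ T * t then coord x k else coord x (T * t)

/-- Extended reference coordinates: `ỹ_0 = 1`, `ỹ_i = y_i` for `1 ≤ i ≤ Tt`,
`ỹ_{Tt+1} = y_{Tt}`. -/
noncomputable def yTilde (T t : ℕ) (k : ℕ) : ℝ :=
  if k = 0 then 1
  else if k ≤ T * t then coord (yVec T t) k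
  else coord (yVec T t) (T * t)

/-- The ratios `z̃_k = x̃_k / ỹ_k`. -/
noncomputable def zTilde (T t : ℕ) (x : EuclideanSpace ℝ (Fin (T * t))) (k : ℕ) : ℝ :=
  xTilde T t x k / yTilde T t k

/-- `Dominate k` holds iff `x_k = 0` or `|(∇g_{T,t}(x))_k| > 0.19·|x_k|`. -/
def Dominate (T t : ℕ) (x : EuclideanSpace ℝ (Fin (T * t))) (k : ℕ) : Prop :=
  coord x k = 0 ∨ |coord (gradient (gFun T t) x) k| > 0.19 * |coord x k|

open Finset Filter Topology

lemma sum_range_mul_eq_sum_sum {M : Type*} [AddCommMonoid M] (f : ℕ → M) (T t : ℕ) :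
    ∑ n ∈ range (T * t), f n = ∑ i ∈ range t, ∑ b ∈ range T, f (i * T + b) := by
  induction t with
  | zero => simp
  | succ t ih => rw [sum_range_succ, ← ih, Nat.mul_succ, sum_range_add]; simp [Nat.mul_comm]

lemma gradient_apply_eq_of_hasDerivAt {ι : Type*} [Fintype ι] [DecidableEq ι]
    {f : EuclideanSpace ℝ ι → ℝ} {x : EuclideanSpace ℝ ι} (hf : DifferentiableAt ℝ f x) (i : ι)
    {c : ℝ} (h : HasDerivAt (fun s : ℝ => f (x + s • EuclideanSpace.single i 1)) c 0) :
    gradient f x i = c := by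
  rw [h.unique (hf.hasFDerivAt.hasLineDerivAt _), ← inner_gradient_left,
    EuclideanSpace.inner_single_right]
  simp

lemma hasDerivAt_sum_apply_add_smul_single {ι : Type*} [Fintype ι] [DecidableEq ι]
    (f : ι → ℝ → ℝ) (x : EuclideanSpace ℝ ι) (i : ι) {c : ℝ} (h : HasDerivAt (f i) c (x i)) :
    HasDerivAt
      (fun s : ℝ => ∑ j, f j ((x + s • EuclideanSpace.single i 1 : EuclideanSpace ℝ ι) j)) c 0 := by
  have hsplit : (fun s : ℝ => ∑ j, f j ((x + s • EuclideanSpace.single i 1 : EuclideanSpace ℝ ι) j))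
      = fun s => f i (x i + s) + ∑ j ∈ univ.erase i, f j (x j) := by
    funext s
    rw [← add_sum_erase _ _ (mem_univ i)]
    congr 1
    · simp
    · exact sum_congr rfl fun j hj => by simp [ne_of_mem_erase hj]
  rw [← add_zero (x i)] at h
  rw [hsplit]
  exact (h.comp_const_add (x i) 0).add_const _

lemma hasDerivAt_max_zero_sq (u : ℝ) :
    HasDerivAt (fun v : ℝ => max v 0 ^ 2) (2 * max u 0) u := by
  rcases lt_trichotomy u 0 with hu | rfl | hu
  · have hloc : (fun v : ℝ => max v 0 ^ 2) =ᶠ[𝓝 u] fun _ => 0 := by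
      filter_upwards [eventually_lt_nhds hu] with v hv
      simp [hv.le]
    simpa [hu.le] using (hasDerivAt_const u (0 : ℝ)).congr_of_eventuallyEq hloc
  · have hsq : HasDerivAt (fun v : ℝ => v ^ 2) 0 0 := by simpa using hasDerivAt_pow 2 (0 : ℝ)
    have hle : HasDerivWithinAt (fun v : ℝ => max v 0 ^ 2) 0 (Set.Iic 0) 0 :=
      (hasDerivWithinAt_const 0 _ 0).congr (fun v hv => by simp [Set.mem_Iic.mp hv]) (by simp)
    have hge : HasDerivWithinAt (fun v : ℝ => max v 0 ^ 2) 0 (Set.Ici 0) 0 :=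
      hsq.hasDerivWithinAt.congr (fun v hv => by simp [Set.mem_Ici.mp hv]) (by simp)
    simpa [← hasDerivWithinAt_univ] using hle.union hge
  · have hloc : (fun v : ℝ => max v 0 ^ 2) =ᶠ[𝓝 u] fun v => v ^ 2 := by
      filter_upwards [eventually_gt_nhds hu] with v hv
      simp [hv.le]
    simpa [hu.le, mul_comm] using (hasDerivAt_pow 2 u).congr_of_eventuallyEq hloc

lemma vFun_eq_max_sq (y : ℝ) (hy : 0 ≤ y) :
    vFun y = fun u => u ^ 2 / 2 - 16 * max (u - 31 / 32 * y) 0 ^ 2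
      + 32 * max (u - y) 0 ^ 2 - 16 * max (u - 33 / 32 * y) 0 ^ 2 := by
  funext u
  unfold vFun
  simp only [max_def]
  split_ifs <;> first | (exfalso; linarith) | ring

lemma differentiable_vFun (y : ℝ) (hy : 0 ≤ y) : Differentiable ℝ (vFun y) := by
  have h : Differentiable ℝ (fun v : ℝ => max v 0 ^ 2) :=
    fun u => (hasDerivAt_max_zero_sq u).differentiableAt
  rw [vFun_eq_max_sq y hy]
  have h₁ := h.comp (differentiable_id.sub_const (31 / 32 * y))
  have h₂ := h.comp (differentiable_id.sub_const y)
  have h₃ := h.comp (differentiable_id.sub_const (33 / 32 * y))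
  fun_prop

lemma hasDerivAt_vFun_of_lt {y u : ℝ} (hu : u < 31 / 32 * y) : HasDerivAt (vFun y) u u := by
  have hloc : vFun y =ᶠ[𝓝 u] fun v => v ^ 2 / 2 := by
    filter_upwards [eventually_lt_nhds hu] with v hv
    simp [vFun, hv.le]
  simpa using ((hasDerivAt_pow 2 u).div_const 2).congr_of_eventuallyEq hloc

lemma coord_eq_apply {d : ℕ} (x : EuclideanSpace ℝ (Fin d)) {m : ℕ} (h1 : 1 ≤ m) (h2 : m ≤ d) :
    coord x m = x ⟨m - 1, by omega⟩ :=
  dif_pos ⟨h1, h2⟩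

lemma coord_add_smul_single {d : ℕ} (x : EuclideanSpace ℝ (Fin d)) {m : ℕ} (h1 : 1 ≤ m)
    (h2 : m ≤ d) (s : ℝ) (n : ℕ) :
    coord (x + s • EuclideanSpace.single ⟨m - 1, by omega⟩ 1) n
      = coord x n + if n = m then s else 0 := by
  unfold coord
  split_ifs <;> simp [Fin.ext_iff] <;> omega

lemma differentiable_coord {d : ℕ} (n : ℕ) :
    Differentiable ℝ (fun x : EuclideanSpace ℝ (Fin d) => coord x n) := by
  unfold coord
  split_ifs
  · exact (EuclideanSpace.proj (𝕜 := ℝ) _).differentiable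
  · exact differentiable_const 0

lemma differentiable_gFun (T t : ℕ) : Differentiable ℝ (gFun T t) := by
  have hc := differentiable_coord (d := T * t)
  have hv : ∀ i, Differentiable ℝ (vFun (yVec T t i)) := fun i =>
    differentiable_vFun _ (by simp only [yVec]; positivity)
  unfold gFun qFun
  fun_prop

/-- `qFun` is `½ ∑_{n < Tt} (w_n x_n - x_{n+1})²` with this weight `w_n` on the edge from
coordinate `n` to `n + 1` (`qFun_eq_sum_edges`). -/
noncomputable def edgeWeight (T n : ℕ) : ℝ := if T ∣ n then 7 / 8 else 1

lemma edgeWeight_nonneg (T n : ℕ) : 0 ≤ edgeWeight T n := by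
  unfold edgeWeight; split_ifs <;> norm_num

lemma edgeWeight_le_one (T n : ℕ) : edgeWeight T n ≤ 1 := by
  unfold edgeWeight; split_ifs <;> norm_num

lemma qFun_eq_sum_edges {T t : ℕ} (hT : 0 < T) (x : EuclideanSpace ℝ (Fin (T * t))) :
    qFun T t x = 1 / 2 * ∑ n ∈ range (T * t),
      (edgeWeight T n * coord x n - coord x (n + 1)) ^ 2 := by
  rw [qFun, sum_range_mul_eq_sum_sum]
  congr 1
  refine sum_congr rfl fun i _ => ?_
  obtain ⟨T, rfl⟩ : ∃ T', T = T' + 1 := ⟨T - 1, by omega⟩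
  rw [sum_range_succ', Nat.add_sub_cancel, add_comm]
  congr 1
  · rw [show Icc 1 T = Ico 1 (T + 1) from rfl, sum_Ico_eq_sum_range, Nat.add_sub_cancel]
    refine sum_congr rfl fun b hb => ?_
    have hndvd : ¬ T + 1 ∣ i * (T + 1) + (b + 1) := by
      rw [Nat.dvd_add_right (dvd_mul_left _ _)]
      exact Nat.not_dvd_of_pos_of_lt (by omega) (by simpa using hb)
    rw [edgeWeight, if_neg hndvd, add_comm 1 b, ← add_assoc]
    ring
  · simp [edgeWeight]

lemma hasDerivAt_sum_sq_edges (w c : ℕ → ℝ) {N m : ℕ} (hm : 1 ≤ m) (hmN : m < N) :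
    HasDerivAt (fun s : ℝ => 1 / 2 * ∑ n ∈ range N,
        (w n * (c n + if n = m then s else 0) - (c (n + 1) + if n + 1 = m then s else 0)) ^ 2)
      (c m - w (m - 1) * c (m - 1) + w m * (w m * c m - c (m + 1))) 0 := by
  have hδ : ∀ n : ℕ, HasDerivAt (fun s : ℝ => if n = m then s else 0) (if n = m then 1 else 0) 0 :=
    fun n => by split_ifs <;> simp [hasDerivAt_id', hasDerivAt_const]
  have hterm : ∀ n ∈ range N, HasDerivAt (fun s : ℝ =>
        (w n * (c n + if n = m then s else 0) - (c (n + 1) + if n + 1 = m then s else 0)) ^ 2)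
      (2 * (w n * c n - c (n + 1))
        * (w n * (if n = m then 1 else 0) - if n + 1 = m then 1 else 0)) 0 :=
    fun n _ => (((((hδ n).const_add (c n)).const_mul (w n)).fun_sub
      ((hδ (n + 1)).const_add (c (n + 1)))).fun_pow 2).congr_deriv
        (by simp only [ite_self, add_zero]; ring)
  refine ((HasDerivAt.fun_sum hterm).const_mul (1 / 2 : ℝ)).congr_deriv ?_
  have hpred : ∀ n, n + 1 = m ↔ n = m - 1 := fun n => by omega
  simp only [mul_sub, sum_sub_distrib, mul_ite, mul_one, mul_zero, hpred, sum_ite_eq', mem_range,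
    if_pos hmN, if_pos (show m - 1 < N by omega), Nat.sub_add_cancel hm]
  ring

lemma coord_gradient_gFun {T t m : ℕ} (x : EuclideanSpace ℝ (Fin (T * t))) (hm : 1 ≤ m)
    (hmN : m < T * t) (hlt : coord x m < 31 / 32 * coord (yVec T t) m) :
    coord (gradient (gFun T t) x) m
      = coord x m - edgeWeight T (m - 1) * coord x (m - 1)
        + edgeWeight T m * (edgeWeight T m * coord x m - coord x (m + 1)) + coord x m := by
  have hT : 0 < T := Nat.pos_of_ne_zero fun h => by simp [h] at hmN
  have hq : HasDerivAt
      (fun s : ℝ => qFun T t (x + s • EuclideanSpace.single ⟨m - 1, by omega⟩ 1))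
      (coord x m - edgeWeight T (m - 1) * coord x (m - 1)
        + edgeWeight T m * (edgeWeight T m * coord x m - coord x (m + 1))) 0 := by
    simp only [qFun_eq_sum_edges hT, coord_add_smul_single x hm hmN.le]
    exact hasDerivAt_sum_sq_edges _ _ hm hmN
  rw [coord_eq_apply x hm hmN.le, coord_eq_apply (yVec T t) hm hmN.le] at hlt
  have hv := hasDerivAt_sum_apply_add_smul_single (fun j => vFun (yVec T t j)) x _
    (hasDerivAt_vFun_of_lt hlt)
  rw [coord_eq_apply (gradient (gFun T t) x) hm hmN.le]
  refine gradient_apply_eq_of_hasDerivAt (differentiable_gFun T t x) _ ((hq.add hv).congr_deriv ?_)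
  rw [coord_eq_apply x hm hmN.le]

lemma coord_yVec_s17 {T t n : ℕ} (hn1 : 1 ≤ n) (hn : n ≤ T * t) :
    coord (yVec T t) n = (7 / 8) ^ ((n - 1) / T) :=
  dif_pos ⟨hn1, hn⟩

lemma yTilde_eq_coord {T t n : ℕ} (hn1 : 1 ≤ n) (hn : n ≤ T * t) :
    yTilde T t n = coord (yVec T t) n := by
  rw [yTilde, if_neg (by omega), if_pos hn]

lemma yTilde_pos {T t n : ℕ} (hn : n ≤ T * t) : 0 < yTilde T t n := by
  rcases Nat.eq_zero_or_pos n with rfl | hn1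
  · simp [yTilde]
  · rw [yTilde_eq_coord hn1 hn, coord_yVec_s17 hn1 hn]
    positivity

lemma yTilde_succ {T t n : ℕ} (hn1 : 1 ≤ n) (hn : n < T * t) :
    yTilde T t (n + 1) = edgeWeight T n * yTilde T t n := by
  rw [yTilde_eq_coord (by omega) hn, yTilde_eq_coord hn1 hn.le, coord_yVec_s17 (by omega) hn,
    coord_yVec_s17 hn1 hn.le, Nat.succ_sub_one, edgeWeight]
  obtain ⟨p, rfl⟩ : ∃ p, n = p + 1 := ⟨n - 1, by omega⟩
  rw [Nat.add_sub_cancel, Nat.succ_div]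
  split_ifs <;> simp [pow_succ, mul_comm]

lemma coord_eq_zTilde_mul_yTilde {T t n : ℕ} (x : EuclideanSpace ℝ (Fin (T * t)))
    (hn : n ≤ T * t) : coord x n = zTilde T t x n * yTilde T t n := by
  rw [zTilde, xTilde, if_pos hn, div_mul_cancel₀ _ (yTilde_pos hn).ne']

lemma edgeWeight_mul_coord_pred {T t m : ℕ} (x : EuclideanSpace ℝ (Fin (T * t))) (hm : 1 ≤ m)
    (hmN : m ≤ T * t) :
    edgeWeight T (m - 1) * coord x (m - 1) = zTilde T t x (m - 1) * yTilde T t m := by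
  rcases hm.eq_or_lt with rfl | hm2
  · -- `ỹ_1 ≠ w_0 ỹ_0`, but `x_0 = z̃_0 = 0`
    simp [coord, zTilde, xTilde]
  · have hy := yTilde_succ (T := T) (t := t) (n := m - 1) (by omega) (by omega)
    rw [Nat.sub_add_cancel hm] at hy
    rw [coord_eq_zTilde_mul_yTilde x (by omega), hy]
    ring

lemma entering_gradient_bound {z₁ z₂ z₃ y w : ℝ} (hy : 0 < y) (hw₀ : 0 ≤ w) (hw₁ : w ≤ 1)
    (h₁ : z₁ < 31 / 32) (h₂ : 5 / 7 ≤ z₂) (h₃ : z₃ ≤ 33 / 32) :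
    0.19 * |z₂ * y| < |z₂ * y - z₁ * y + w * (w * (z₂ * y) - z₃ * (w * y)) + z₂ * y| := by
  have hw2 : w ^ 2 ≤ 1 := by nlinarith
  have key : 0.19 * z₂ < 2 * z₂ - z₁ + w ^ 2 * (z₂ - z₃) := by
    rcases le_total z₂ z₃ with h | h
    · nlinarith [mul_nonneg (sub_nonneg.2 hw2) (sub_nonneg.2 h)]
    · nlinarith [mul_nonneg (sq_nonneg w) (sub_nonneg.2 h)]
  have hx : 0 < z₂ * y := mul_pos (by linarith) hy
  have hlt : 0.19 * (z₂ * y) < z₂ * y - z₁ * y + w * (w * (z₂ * y) - z₃ * (w * y)) + z₂ * y :=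
    calc 0.19 * (z₂ * y) = 0.19 * z₂ * y := by ring
      _ < (2 * z₂ - z₁ + w ^ 2 * (z₂ - z₃)) * y := mul_lt_mul_of_pos_right key hy
      _ = _ := by ring
  rw [abs_of_pos hx, abs_of_pos (by linarith)]
  exact hlt

theorem dominate_of_entering'_general (T t : ℕ)
    (x : EuclideanSpace ℝ (Fin (T * t))) (k : ℕ) (hk1 : 2 ≤ k) (hk2 : k ≤ T * t)
    (h1 : zTilde T t x (k - 2) < 31 / 32)
    (h2 : 5 / 7 ≤ zTilde T t x (k - 1)) (h2' : zTilde T t x (k - 1) < 31 / 32)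
    (h3 : zTilde T t x k ∈ Set.Icc (31 / 32 : ℝ) (33 / 32)) :
    Dominate T t x (k - 1) := by
  obtain ⟨m, rfl⟩ : ∃ m, k = m + 1 := ⟨k - 1, by omega⟩
  have hm : 1 ≤ m := by omega
  rw [show m + 1 - 2 = m - 1 by omega] at h1
  rw [Nat.add_sub_cancel] at h2 h2' ⊢
  have hy := yTilde_pos (T := T) (t := t) (n := m) (by omega)
  have hx₁ := edgeWeight_mul_coord_pred x hm (by omega)
  have hx₂ := coord_eq_zTilde_mul_yTilde x (show m ≤ T * t by omega)
  have hx₃ : coord x (m + 1) = zTilde T t x (m + 1) * (edgeWeight T m * yTilde T t m) := by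
    rw [coord_eq_zTilde_mul_yTilde x hk2, yTilde_succ hm hk2]
  have hlt : coord x m < 31 / 32 * coord (yVec T t) m := by
    rw [hx₂, ← yTilde_eq_coord hm (by omega)]
    exact mul_lt_mul_of_pos_right h2' hy
  right
  rw [coord_gradient_gFun x hm hk2 hlt, hx₁, hx₂, hx₃]
  exact entering_gradient_bound hy (edgeWeight_nonneg T m) (edgeWeight_le_one T m) h1 h2 h3.2

/-- For `k ∈ {2, …, Tt}`: if `z̃_{k-2} < 31/32`,
`5/7 ≤ z̃_{k-1} < 31/32` and `z̃_k ∈ [31/32, 33/32]`, then `Dominate (k-1)` holds. -/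
theorem dominate_of_entering' (T t : ℕ) (hT : 0 < T) (ht : 0 < t)
    (x : EuclideanSpace ℝ (Fin (T * t))) (k : ℕ) (hk1 : 2 ≤ k) (hk2 : k ≤ T * t)
    (h1 : zTilde T t x (k - 2) < 31 / 32)
    (h2 : 5 / 7 ≤ zTilde T t x (k - 1)) (h2' : zTilde T t x (k - 1) < 31 / 32)
    (h3 : zTilde T t x k ∈ Set.Icc (31 / 32 : ℝ) (33 / 32)) :
    Dominate T t x (k - 1) :=
  dominate_of_entering'_general T t x k hk1 hk2 h1 h2 h2' h3
end

section
/- For every y > 0 and every x ∈ ℝ: 0 ≤ v_y(x) ≤ (1/2)x², v_y(0) = 0, and 0 is the unique global minimizer of v_y; moreover v_y(y) = (31/64)y². -/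
/-- For every `y > 0`: `0 ≤ v_y(x) ≤ (1/2)x²`, `v_y(0) = 0`,
`0` is the unique global minimizer of `v_y`, and `v_y(y) = (31/64)y²`. -/
theorem vFun_basic_properties (y : ℝ) (hy : 0 < y) :
    (∀ x : ℝ, 0 ≤ vFun y x ∧ vFun y x ≤ x ^ 2 / 2) ∧
    vFun y 0 = 0 ∧
    (∀ x : ℝ, x ≠ 0 → vFun y 0 < vFun y x) ∧
    vFun y y = 31 / 64 * y ^ 2 := by
  have h0 : vFun y 0 = 0 := by
    unfold vFun
    rw [if_pos (by nlinarith)]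
    norm_num
  refine ⟨?_, h0, ?_, ?_⟩
  · intro x
    unfold vFun
    split_ifs with h1 h2 h3 <;> constructor <;> nlinarith [sq_nonneg x, sq_nonneg y, sq_nonneg (x - 31/32*y), sq_nonneg (x - 33/32*y)]
  · intro x hx
    rw [h0]
    unfold vFun
    split_ifs with h1 h2 h3 <;>
      nlinarith [sq_nonneg x, sq_nonneg y, sq_nonneg (x - 31/32*y), sq_nonneg (x - 33/32*y), pow_pos (abs_pos.mpr hx) 2, sq_abs x]
  · unfold vFun
    rw [if_neg (by nlinarith), if_pos le_rfl]
    ring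
end
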